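/- arXiv:2207.04954 — 2 statements merged into one kernel-verified Lean document; each statement's English description precedes it below -/
import Mathlib

section
/- Let k ≥ 1 be a natural number and let L be a list of unordered pairs of vertices of a finite vertex type V. Then the graph H = greedy(k, L) contains no cycle of length at most 2k; equivalently, the girth of H is at least 2k + 1. -/
/-- The greedy spanner construction: process the entries of `L` in order, starting from the
empty graph, adding an entry `{u,v}` as an edge iff the extended distance between `u` and `v`
in the graph built so far is at least `2k`. -/
noncomputable def greedy {V : Type*} (k : ℕ) (L : List (Sym2 V)) : SimpleGraph V :=
  L.foldl (fun H e =>
    if (2 * k : ℕ∞) ≤ Sym2.lift ⟨H.edist, fun _ _ => H.edist_comm⟩ e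
    then H ⊔ SimpleGraph.fromEdgeSet {e} else H) ⊥

/-! A cycle of length at most `2k` in `greedy k L` has a last-added edge `s(a, b)`. When it
was added, the rest of the cycle was already present in the graph (walks avoiding the new edge
transfer back), so `a` and `b` were joined by a walk of length at most `2k - 1`, contradicting
the greedy rule. Hence the invariant `2k + 1 ≤ egirth` survives each greedy step. -/

namespace SimpleGraph

variable {V : Type*} {G : SimpleGraph V}

theorem Walk.IsCircuit.exists_walk_length_lt_of_mem_edges {u a b : V} {c : G.Walk u u}
    (hc : c.IsCircuit) (he : s(a, b) ∈ c.edges) :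
    ∃ p : G.Walk a b, s(a, b) ∉ p.edges ∧ p.length < c.length := by
  classical
  let d := c.rotate a (c.fst_mem_support_of_mem_edges he)
  have hd : d.edges.Nodup := (hc.rotate _).isTrail.edges_nodup
  have hed : s(a, b) ∈ d.edges := (c.rotate_edges _ _).mem_iff.mpr he
  have hb : b ∈ d.support := d.snd_mem_support_of_mem_edges hed
  -- `d` splits at `b` into two walks between `a` and `b`; the edge lies on exactly one of them
  have hsplit := d.take_spec hb
  set p := d.takeUntil b hb
  set q := d.dropUntil b hb
  have hlen : p.length + q.length = c.length := by
    rw [← Walk.length_append, hsplit, Walk.length_rotate]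
  rw [← hsplit, Walk.edges_append, List.nodup_append] at hd
  rw [← hsplit, Walk.edges_append, List.mem_append] at hed
  rcases hed with hp | hq
  · have : 0 < p.length := by simpa using List.length_pos_of_mem hp
    exact ⟨q.reverse, by simpa using fun hq => hd.2.2 _ hp _ hq rfl, by simp; omega⟩
  · have : 0 < q.length := by simpa using List.length_pos_of_mem hq
    exact ⟨p, fun hp => hd.2.2 _ hp _ hq rfl, by omega⟩

theorem Walk.edges_subset_edgeSet_of_sup_fromEdgeSet {u v : V} {e : Sym2 V}
    (p : (G ⊔ fromEdgeSet {e}).Walk u v) (he : e ∉ p.edges) : ∀ f ∈ p.edges, f ∈ G.edgeSet := by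
  intro f hf
  have hf' := p.edges_subset_edgeSet hf
  rw [edgeSet_sup, edgeSet_fromEdgeSet] at hf'
  rcases hf' with hG | ⟨rfl, -⟩
  · exact hG
  · exact absurd hf he

theorem le_egirth_sup_fromEdgeSet {n : ℕ∞} {a b : V} (hG : n ≤ G.egirth)
    (hab : n ≤ G.edist a b + 1) : n ≤ (G ⊔ fromEdgeSet {s(a, b)}).egirth := by
  rw [le_egirth]
  intro v c hc
  by_cases he : s(a, b) ∈ c.edges
  · obtain ⟨p, hpe, hpc⟩ := hc.isCircuit.exists_walk_length_lt_of_mem_edges he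
    have hp := p.edges_subset_edgeSet_of_sup_fromEdgeSet hpe
    calc n ≤ G.edist a b + 1 := hab
      _ ≤ p.length + 1 := by gcongr; simpa using (p.transfer G hp).edist_le
      _ ≤ c.length := by exact_mod_cast hpc
  · have hc' := c.edges_subset_edgeSet_of_sup_fromEdgeSet he
    calc n ≤ G.egirth := hG
      _ ≤ c.length := by simpa using egirth_le_length (hc.transfer hc')

end SimpleGraph

section Greedy

open SimpleGraph

variable {V : Type*}

noncomputable def greedyStep (k : ℕ) (H : SimpleGraph V) (e : Sym2 V) : SimpleGraph V :=
  if (2 * k : ℕ∞) ≤ Sym2.lift ⟨H.edist, fun _ _ => H.edist_comm⟩ e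
  then H ⊔ fromEdgeSet {e} else H

theorem greedy_eq_foldl_greedyStep (k : ℕ) (L : List (Sym2 V)) :
    greedy k L = L.foldl (greedyStep k) ⊥ := rfl

theorem le_egirth_greedyStep {k : ℕ} {H : SimpleGraph V} (hH : 2 * k + 1 ≤ H.egirth)
    (e : Sym2 V) : 2 * k + 1 ≤ (greedyStep k H e).egirth := by
  induction e using Sym2.ind with
  | _ a b =>
  unfold greedyStep
  split_ifs with hab
  · exact le_egirth_sup_fromEdgeSet hH (by gcongr; simpa using hab)
  · exact hH

theorem le_egirth_foldl_greedyStep {k : ℕ} (L : List (Sym2 V)) {H : SimpleGraph V}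
    (hH : 2 * k + 1 ≤ H.egirth) : 2 * k + 1 ≤ (L.foldl (greedyStep k) H).egirth := by
  induction L generalizing H with
  | nil => exact hH
  | cons e L ih => exact ih (le_egirth_greedyStep hH e)

theorem le_egirth_greedy (k : ℕ) (L : List (Sym2 V)) : 2 * k + 1 ≤ (greedy k L).egirth := by
  rw [greedy_eq_foldl_greedyStep]
  exact le_egirth_foldl_greedyStep L (by simp)

end Greedy

theorem greedy_girth_general {V : Type*} (k : ℕ) (L : List (Sym2 V)) :
    ∀ (v : V) (c : (greedy k L).Walk v v), c.IsCycle → 2 * k + 1 ≤ c.length := by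
  intro v c hc
  exact_mod_cast (le_egirth_greedy k L).trans (SimpleGraph.egirth_le_length hc)

/-- the greedy graph `greedy k L` has no cycle of length at most `2k`;
equivalently, its girth is at least `2k + 1`. -/
theorem greedy_girth {V : Type*} (k : ℕ) (hk : 1 ≤ k) (L : List (Sym2 V)) :
    ∀ (v : V) (c : (greedy k L).Walk v v), c.IsCycle → 2 * k + 1 ≤ c.length :=
  greedy_girth_general k L
end

section
/- Let G be a simple graph on a finite vertex type V, let B : V → I be an assignment of vertices to buckets (I a finite index type), and let H be a subgraph of G satisfying: (i) every edge {u,v} of G with B(u) = B(v) is an edge of H; (ii) for every vertex v and every bucket i, if v has a neighbor in G lying in bucket i, then H contains an edge {v, c} for some neighbor c of v in G with B(c) = i; and (iii) for every pair of distinct vertices u, u' with B(u) = B(u') that have a common neighbor in G, there exists a common neighbor w of u and u' in G such that both {u, w} and {u', w} are edges of H. Then for every edge {u,v} of G, edist_H(u,v) ≤ 3; consequently, H is a 3-spanner of G. -/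
/-!
Let `uv` be an edge of `G`. The partner edge of `u` into the bucket of `v` ends at some `c`
with `B c = B v`; either `c = v`, or `c` and `v` are distinct vertices of one bucket with the
common neighbour `u`, so a witness `x` gives the path `u - c - x - v` in `H`. Stretch at most
`3` on edges gives stretch at most `3` on all pairs by following a shortest walk of `G`.
-/

namespace SimpleGraph

variable {V : Type*} {G H : SimpleGraph V}

theorem edist_le_mul_length_of_forall_adj {k : ℕ∞} (hk : ∀ u v, G.Adj u v → H.edist u v ≤ k)
    {u v : V} (p : G.Walk u v) : H.edist u v ≤ k * p.length := by
  induction p with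
  | nil => simp
  | cons huw p ih =>
    calc H.edist _ _ ≤ H.edist _ _ + H.edist _ _ := SimpleGraph.edist_triangle
      _ ≤ k + k * p.length := add_le_add (hk _ _ huw) ih
      _ = k * (p.cons huw).length := by rw [Walk.length_cons]; push_cast; ring

theorem edist_le_mul_edist_of_forall_adj {k : ℕ∞} (hk0 : k ≠ 0)
    (hk : ∀ u v, G.Adj u v → H.edist u v ≤ k) (u v : V) :
    H.edist u v ≤ k * G.edist u v := by
  obtain htop | hne := eq_or_ne (G.edist u v) ⊤
  · simp [htop, ENat.mul_top hk0]
  · obtain ⟨p, hp⟩ := exists_walk_of_edist_ne_top hne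
    rw [← hp]
    exact edist_le_mul_length_of_forall_adj hk p

theorem edist_le_three_of_adj_of_buckets {I : Type*} (B : V → I)
    (h2 : ∀ (v : V) (i : I), (∃ c, G.Adj v c ∧ B c = i) →
      ∃ c, G.Adj v c ∧ B c = i ∧ H.Adj v c)
    (h3 : ∀ u u' : V, u ≠ u' → B u = B u' → (∃ x, G.Adj u x ∧ G.Adj u' x) →
      ∃ x, G.Adj u x ∧ G.Adj u' x ∧ H.Adj u x ∧ H.Adj u' x)
    {u v : V} (huv : G.Adj u v) : H.edist u v ≤ 3 := by
  obtain ⟨c, huc, hBc, hHuc⟩ := h2 u (B v) ⟨v, huv, rfl⟩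
  obtain rfl | hcv := eq_or_ne c v
  · exact (edist_le hHuc.toWalk).trans (by norm_num)
  obtain ⟨x, -, -, hHcx, hHvx⟩ := h3 c v hcv hBc ⟨u, huc.symm, huv.symm⟩
  exact edist_le (.cons hHuc (.cons hHcx hHvx.symm.toWalk))

end SimpleGraph

theorem bucket_three_spanner_general {V I : Type*}
    (G : SimpleGraph V) (B : V → I) (H : SimpleGraph V)
    (h2 : ∀ (v : V) (i : I), (∃ c, G.Adj v c ∧ B c = i) →
      ∃ c, G.Adj v c ∧ B c = i ∧ H.Adj v c)
    (h3 : ∀ u u' : V, u ≠ u' → B u = B u' → (∃ x, G.Adj u x ∧ G.Adj u' x) →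
      ∃ x, G.Adj u x ∧ G.Adj u' x ∧ H.Adj u x ∧ H.Adj u' x) :
    (∀ u v : V, G.Adj u v → H.edist u v ≤ 3) ∧
    (∀ u v : V, H.edist u v ≤ 3 * G.edist u v) := by
  have hedge : ∀ u v, G.Adj u v → H.edist u v ≤ 3 := fun _ _ huv ↦
    SimpleGraph.edist_le_three_of_adj_of_buckets B h2 h3 huv
  exact ⟨hedge, SimpleGraph.edist_le_mul_edist_of_forall_adj (by norm_num) hedge⟩

/-- a subgraph `H` of `G` containing all intra-bucket edges, a partner edge
into every bucket neighborhood, and witness edges for every same-bucket pair with a common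
neighbor, has stretch at most `3` on every edge of `G`; consequently `H` is a `3`-spanner
of `G`. -/
theorem bucket_three_spanner {V I : Type*} [Fintype V] [Fintype I]
    (G : SimpleGraph V) (B : V → I) (H : SimpleGraph V) (hHG : H ≤ G)
    (h1 : ∀ u v : V, G.Adj u v → B u = B v → H.Adj u v)
    (h2 : ∀ (v : V) (i : I), (∃ c, G.Adj v c ∧ B c = i) →
      ∃ c, G.Adj v c ∧ B c = i ∧ H.Adj v c)
    (h3 : ∀ u u' : V, u ≠ u' → B u = B u' → (∃ x, G.Adj u x ∧ G.Adj u' x) →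
      ∃ x, G.Adj u x ∧ G.Adj u' x ∧ H.Adj u x ∧ H.Adj u' x) :
    (∀ u v : V, G.Adj u v → H.edist u v ≤ 3) ∧
    (∀ u v : V, H.edist u v ≤ 3 * G.edist u v) :=
  bucket_three_spanner_general G B H h2 h3
end
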